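/- Let y : [0,∞) → E be a nonconformity flow trajectory, let ε > 0 with |S(y(0)) − τ| > ε, and suppose the velocity scalar is chosen as λ = log( |S(y(0)) − τ| / ε ). Then the ε-hitting time T_ε := inf { t ≥ 0 : |S(y(t)) − τ| ≤ ε } equals 1; that is, the trajectory is within ε of the target level set at time t = 1. -/

import Mathlib

open scoped RealInnerProductSpace

/-- The nonconformity velocity field
`v(y) = -λ (S y - τ) ∇S(y) / ‖∇S(y)‖²`. -/
noncomputable def ncVel {n : ℕ} (S : EuclideanSpace ℝ (Fin n) → ℝ) (τ lam : ℝ)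
    (y : EuclideanSpace ℝ (Fin n)) : EuclideanSpace ℝ (Fin n) :=
  (-lam * (S y - τ) / ‖gradient S y‖ ^ 2) • gradient S y

/-!
Along the flow, `d/dt (S(y t) - τ) = ⟪∇S, v⟫ = -λ (S(y t) - τ)`, so the residual decays exactly
like `(S(y 0) - τ) e^{-λ t}`. Its absolute value is strictly decreasing, and the choice
`λ = log(|S(y 0) - τ| / ε)` makes it equal to `ε` precisely at `t = 1`; hence the hitting set is
`[1, ∞)`.
-/

open Real

section Flow

variable {n : ℕ} {S : EuclideanSpace ℝ (Fin n) → ℝ} {τ lam : ℝ}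

theorem inner_gradient_ncVel {x : EuclideanSpace ℝ (Fin n)} (hx : gradient S x ≠ 0) :
    ⟪gradient S x, ncVel S τ lam x⟫ = -lam * (S x - τ) := by
  have hnorm : ‖gradient S x‖ ≠ 0 := norm_ne_zero_iff.2 hx
  rw [ncVel, real_inner_smul_right, real_inner_self_eq_norm_sq]
  field_simp

theorem hasDerivAt_sub_comp_of_hasDerivAt_ncVel {y : ℝ → EuclideanSpace ℝ (Fin n)} {t : ℝ}
    (hS : DifferentiableAt ℝ S (y t)) (hy : HasDerivAt y (ncVel S τ lam (y t)) t)
    (hgrad : gradient S (y t) ≠ 0) :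
    HasDerivAt (fun s => S (y s) - τ) (-lam * (S (y t) - τ)) t := by
  have hchain := (hS.hasGradientAt.hasFDerivAt.comp_hasDerivAt t hy).sub_const τ
  refine hchain.congr_deriv ?_
  rw [InnerProductSpace.toDual_apply_apply, inner_gradient_ncVel hgrad]

end Flow

theorem eq_mul_exp_of_hasDerivAt_mul_self {f : ℝ → ℝ} {k : ℝ}
    (hf : ∀ t, 0 ≤ t → HasDerivAt f (k * f t) t) {t : ℝ} (ht : 0 ≤ t) :
    f t = f 0 * exp (k * t) := by
  set g : ℝ → ℝ := fun s => f s * exp (-(k * s))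
  have hg : ∀ s, 0 ≤ s → HasDerivAt g 0 s := by
    intro s hs
    have hprod := (hf s hs).mul (((hasDerivAt_id s).const_mul k).neg.exp)
    refine hprod.congr_deriv ?_
    ring
  have hconst : g t = g 0 :=
    constant_of_has_deriv_right_zero (fun s hs => (hg s hs.1).continuousAt.continuousWithinAt)
      (fun s hs => (hg s hs.1).hasDerivWithinAt) t ⟨ht, le_rfl⟩
  simp only [g, mul_zero, neg_zero, exp_zero, mul_one] at hconst
  rw [← hconst, mul_assoc, ← exp_add, neg_add_cancel, exp_zero, mul_one]

theorem mul_exp_neg_mul_le_mul_exp_neg_iff {c lam t : ℝ} (hc : 0 < c) (hlam : 0 < lam) :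
    c * exp (-lam * t) ≤ c * exp (-lam) ↔ 1 ≤ t := by
  rw [mul_le_mul_iff_right₀ hc, exp_le_exp, neg_mul, neg_le_neg_iff, le_mul_iff_one_le_right hlam]

theorem mul_exp_neg_log_div {c ε : ℝ} (hc : 0 < c) (hε : 0 < ε) :
    c * exp (-log (c / ε)) = ε := by
  rw [exp_neg, exp_log (div_pos hc hε)]
  field_simp

/-- choosing the velocity scalar `λ = log(|S(y(0)) - τ| / ε)`
makes the ε-hitting time equal to `1`. -/
theorem eps_hitting_time_one {n : ℕ} (S : EuclideanSpace ℝ (Fin n) → ℝ)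
    (hS : Differentiable ℝ S) (τ lam : ℝ) (hlam : 0 < lam)
    (y : ℝ → EuclideanSpace ℝ (Fin n))
    (hy : ∀ t : ℝ, 0 ≤ t → HasDerivAt y (ncVel S τ lam (y t)) t)
    (hgrad : ∀ t : ℝ, 0 ≤ t → gradient S (y t) ≠ 0)
    (ε : ℝ) (hε : 0 < ε) (h0 : ε < |S (y 0) - τ|)
    (hchoice : lam = Real.log (|S (y 0) - τ| / ε)) :
    sInf {t : ℝ | 0 ≤ t ∧ |S (y t) - τ| ≤ ε} = 1 := by
  have hc : 0 < |S (y 0) - τ| := hε.trans h0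
  have hresidual : ∀ t, 0 ≤ t → |S (y t) - τ| = |S (y 0) - τ| * exp (-lam * t) := by
    intro t ht
    rw [eq_mul_exp_of_hasDerivAt_mul_self (fun s hs => hasDerivAt_sub_comp_of_hasDerivAt_ncVel
      (hS (y s)) (hy s hs) (hgrad s hs)) ht, abs_mul, abs_exp]
  have hε_eq : |S (y 0) - τ| * exp (-lam) = ε := by
    rw [hchoice]
    exact mul_exp_neg_log_div hc hε
  have hset : {t : ℝ | 0 ≤ t ∧ |S (y t) - τ| ≤ ε} = Set.Ici 1 := by
    ext t
    refine ⟨fun ⟨ht, hle⟩ => ?_, fun ht => ?_⟩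
    · rwa [hresidual t ht, ← hε_eq, mul_exp_neg_mul_le_mul_exp_neg_iff hc hlam] at hle
    · have ht0 : 0 ≤ t := zero_le_one.trans ht
      refine ⟨ht0, ?_⟩
      rwa [hresidual t ht0, ← hε_eq, mul_exp_neg_mul_le_mul_exp_neg_iff hc hlam]
  rw [hset, csInf_Ici]
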